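/- arXiv:1411.5533 — 2 statements merged into one kernel-verified Lean document; each statement's English description precedes it below -/
import Mathlib

section
/- Dupont's homotopy identity holds: id_{Λ(t,dt)} − i ∘ p = δ ∘ h + h ∘ δ, where h: Λ(t, dt) → Λ(t, dt) is the degree +1 map defined by h(t^k) = 0 and h(t^k dt) = (t^{k+1} − t)/(k+1). -/
noncomputable section

open Polynomial

/-- The Sullivan algebra `Λ(t, dt) = K[t] ⊕ K[t]·dt`: a pair `(P, Q)`
represents the form `P(t) + Q(t)dt`. -/
abbrev Sullivan (K : Type*) [Field K] := Polynomial K × Polynomial K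

/-- The differential `δ(P(t) + Q(t)dt) = P'(t)dt`. -/
def sullivanD (K : Type*) [Field K] : Sullivan K →ₗ[K] Sullivan K :=
  LinearMap.prod 0 (Polynomial.derivative ∘ₗ LinearMap.fst K (Polynomial K) (Polynomial K))

/-- The three-dimensional subcomplex `J = K·1 ⊕ K·t ⊕ K·dt`, with coordinates
`(a, b, c)` representing `a·1 + b·t + c·dt`. -/
abbrev Jcx (K : Type*) [Field K] := K × K × K

/-- The differential on `J`: `δ(1) = 0`, `δ(t) = dt`, `δ(dt) = 0`. -/
def dJ {K : Type*} [Field K] (v : Jcx K) : Jcx K := (0, 0, v.2.1)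

/-- The inclusion `i : J → Λ(t,dt)`, `(a, b, c) ↦ (a + b·t) + c·dt`. -/
def iDup {K : Type*} [Field K] (v : Jcx K) : Sullivan K :=
  (Polynomial.C v.1 + Polynomial.C v.2.1 * Polynomial.X, Polynomial.C v.2.2)

/-- Dupont's projection `p : Λ(t,dt) → J`: `p(1) = 1`, `p(t^k) = t` for
`k ≥ 1`, and `p(t^k dt) = dt/(k+1)`; equivalently
`p(P + Q dt) = P(0)·1 + (P(1) − P(0))·t + (Σ_k Q_k/(k+1))·dt`. -/
def pDup {K : Type*} [Field K] (x : Sullivan K) : Jcx K :=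
  (x.1.coeff 0, x.1.eval 1 - x.1.coeff 0,
    x.2.sum fun k c => c / ((k : K) + 1))

/-- Dupont's homotopy `h : Λ(t,dt) → Λ(t,dt)`, the degree `+1` map with
`h(t^k) = 0` and `h(t^k dt) = (t^{k+1} − t)/(k+1)`. -/
def hDup {K : Type*} [Field K] (x : Sullivan K) : Sullivan K :=
  (x.2.sum fun k c => (c / ((k : K) + 1)) •
      (Polynomial.X ^ (k + 1) - Polynomial.X), 0)


lemma aux_deriv_sum {K : Type*} [Field K] [CharZero K] (P : Polynomial K) :
    P - (Polynomial.C (P.coeff 0) +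
        Polynomial.C (P.eval 1 - P.coeff 0) * Polynomial.X) =
      (Polynomial.derivative P).sum fun k c => (c / ((k : K) + 1)) •
        (Polynomial.X ^ (k + 1) - Polynomial.X) := by
  induction P using Polynomial.induction_on' with
  | add p q hp hq =>
    rw [map_add, Polynomial.sum_add_index]
    · simp only [Polynomial.coeff_add, Polynomial.eval_add, map_add, map_sub] at hp hq ⊢
      linear_combination hp + hq
    · intro n; simp
    · intro n a b; rw [add_div, add_smul]
  | monomial n a =>
    cases n with
    | zero =>
      simp [Polynomial.monomial_zero_left]
    | succ m =>
      have h : ((m : K) + 1) ≠ 0 := Nat.cast_add_one_ne_zero m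
      rw [Polynomial.derivative_monomial,
        Polynomial.sum_monomial_index _ _ (by simp)]
      simp only [Nat.add_sub_cancel, Nat.cast_add, Nat.cast_one]
      rw [mul_div_assoc, div_self h, mul_one]
      rw [Polynomial.coeff_monomial]
      rw [if_neg m.succ_ne_zero]
      rw [Polynomial.eval_monomial, one_pow, mul_one]
      rw [smul_sub, Polynomial.smul_eq_C_mul, Polynomial.smul_eq_C_mul,
        ← Polynomial.C_mul_X_pow_eq_monomial]
      simp only [map_sub, map_zero, sub_zero]
      ring

lemma aux_sum_deriv {K : Type*} [Field K] [CharZero K] (Q : Polynomial K) :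
    Q - Polynomial.C (Q.sum fun k c => c / ((k : K) + 1)) =
      Polynomial.derivative (Q.sum fun k c => (c / ((k : K) + 1)) •
        (Polynomial.X ^ (k + 1) - Polynomial.X)) := by
  induction Q using Polynomial.induction_on' with
  | add p q hp hq =>
    rw [Polynomial.sum_add_index, Polynomial.sum_add_index, map_add, map_add]
    · linear_combination hp + hq
    · intro n; simp
    · intro n a b; rw [add_div, add_smul]
    · intro n; simp
    · intro n a b; rw [add_div]
  | monomial n a =>
    have h : ((n : K) + 1) ≠ 0 := Nat.cast_add_one_ne_zero n
    rw [Polynomial.sum_monomial_index _ _ (by simp),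
      Polynomial.sum_monomial_index _ _ (by simp)]
    rw [smul_sub, Polynomial.smul_eq_C_mul, Polynomial.smul_eq_C_mul,
      map_sub, Polynomial.derivative_C_mul, Polynomial.derivative_C_mul,
      Polynomial.derivative_X_pow, Polynomial.derivative_X,
      ← Polynomial.C_mul_X_pow_eq_monomial]
    simp only [Nat.add_sub_cancel]
    push_cast
    rw [mul_one, ← mul_assoc, ← Polynomial.C_mul, div_mul_cancel₀ a h]

/-- Dupont's homotopy identity: `id − i ∘ p = δ ∘ h + h ∘ δ` on `Λ(t,dt)`. -/
theorem dupont_homotopy (K : Type*) [Field K] [CharZero K] :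
    ∀ x : Sullivan K,
      x - iDup (pDup x) = sullivanD K (hDup x) + hDup (sullivanD K x) := by
  rintro ⟨P, Q⟩
  refine Prod.ext ?_ ?_ <;>
    simp only [sullivanD, hDup, iDup, pDup, LinearMap.prod_apply, Function.prod,
      LinearMap.coe_comp, Function.comp_apply, LinearMap.fst_apply,
      LinearMap.zero_apply, Prod.fst_add, Prod.snd_add, Prod.fst_sub, Prod.snd_sub,
      zero_add, add_zero]
  · exact aux_deriv_sum P
  · exact aux_sum_deriv Q


end
end

section
/- Dupont's contraction satisfies the side conditions: h ∘ h = 0, p ∘ h = 0, and h ∘ i = 0. -/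
noncomputable section

open Polynomial

/-- Dupont's contraction satisfies the side conditions
`h ∘ h = 0`, `p ∘ h = 0`, and `h ∘ i = 0`. -/
theorem dupont_side_conditions (K : Type*) [Field K] [CharZero K] :
    (∀ x : Sullivan K, hDup (hDup x) = 0)
    ∧ (∀ x : Sullivan K, pDup (hDup x) = 0)
    ∧ (∀ v : Jcx K, hDup (iDup v) = 0) := by
  refine ⟨fun x => ?_, fun x => ?_, fun v => ?_⟩
  · simp [hDup, Polynomial.sum_zero_index, Prod.ext_iff]
  · have h0 : ((x.2.sum fun k c => (c / ((k : K) + 1)) •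
        (Polynomial.X ^ (k + 1) - Polynomial.X)) : Polynomial K).coeff 0 = 0 := by
      rw [Polynomial.coeff_sum]
      apply Finset.sum_eq_zero
      intro k _
      simp [Polynomial.coeff_X_pow]
    have h1 : ((x.2.sum fun k c => (c / ((k : K) + 1)) •
        (Polynomial.X ^ (k + 1) - Polynomial.X)) : Polynomial K).eval 1 = 0 := by
      rw [Polynomial.sum, Polynomial.eval_finset_sum]
      apply Finset.sum_eq_zero
      intro k _
      simp
    simp [pDup, hDup, h0, h1, Polynomial.sum_zero_index, Prod.ext_iff]
  · have : ((Polynomial.C v.2.2).sum fun k c => (c / ((k : K) + 1)) •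
        ((Polynomial.X : Polynomial K) ^ (k + 1) - Polynomial.X)) = 0 := by
      rw [Polynomial.sum_C_index] <;> simp
    simp [hDup, iDup, this, Prod.ext_iff]

end
end
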